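/- arXiv:2302.04674 — 3 statements merged into one kernel-verified Lean document; each statement's English description precedes it below -/
import Mathlib

section
/- For any x : ℕ_{a+1-n} → ℝ, α ∈ (n-1,n), n ∈ ℤ₊, k ∈ ℕ_{a+1}, and w : ℕ_{a+1} → ℝ∖{0}, one has {}_a^R∇_k^{α,w(k)} {}_a^G∇_k^{-α,w(k)} x(k) = x(k) and {}_a^C∇_k^{α,w(k)} {}_a^G∇_k^{-α,w(k)} x(k) = x(k); that is, applying the tempered fractional sum of order α followed by the Riemann–Liouville or Caputo tempered fractional difference of order α recovers x. -/
open Real Finset Filter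

noncomputable def rising (p q : ℝ) : ℝ := Real.Gamma (p + q) / Real.Gamma p

noncomputable def gbinom (p : ℝ) (i : ℕ) : ℝ :=
  Real.Gamma (p + 1) / (Real.Gamma ((i : ℝ) + 1) * Real.Gamma (p - (i : ℝ) + 1))

noncomputable def nabla (n : ℕ) (z : ℤ → ℝ) (k : ℤ) : ℝ :=
  ∑ i ∈ Finset.range (n + 1), (-1 : ℝ) ^ i * (n.choose i : ℝ) * z (k - (i : ℤ))

noncomputable def glSum (a : ℤ) (β : ℝ) (z : ℤ → ℝ) (k : ℤ) : ℝ :=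
  ∑ i ∈ Finset.Icc (a + 1) k, rising ((k : ℝ) - (i : ℝ) + 1) (-β - 1) / Real.Gamma (-β) * z i

noncomputable def rl (a : ℤ) (α : ℝ) (n : ℕ) (z : ℤ → ℝ) (k : ℤ) : ℝ :=
  nabla n (fun j => glSum a (α - (n : ℝ)) z j) k

noncomputable def caputo (a : ℤ) (α : ℝ) (n : ℕ) (z : ℤ → ℝ) (k : ℤ) : ℝ :=
  glSum a (α - (n : ℝ)) (fun j => nabla n z j) k

noncomputable def nablaT (w : ℤ → ℝ) (n : ℕ) (x : ℤ → ℝ) (k : ℤ) : ℝ :=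
  (w k)⁻¹ * nabla n (fun j => w j * x j) k

noncomputable def glSumT (w : ℤ → ℝ) (a : ℤ) (β : ℝ) (x : ℤ → ℝ) (k : ℤ) : ℝ :=
  (w k)⁻¹ * glSum a β (fun j => w j * x j) k

noncomputable def rlT (w : ℤ → ℝ) (a : ℤ) (α : ℝ) (n : ℕ) (x : ℤ → ℝ) (k : ℤ) : ℝ :=
  (w k)⁻¹ * rl a α n (fun j => w j * x j) k

noncomputable def caputoT (w : ℤ → ℝ) (a : ℤ) (α : ℝ) (n : ℕ) (x : ℤ → ℝ) (k : ℤ) : ℝ :=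
  (w k)⁻¹ * caputo a α n (fun j => w j * x j) k

noncomputable def glBin (a : ℤ) (α : ℝ) (z : ℤ → ℝ) (k : ℤ) : ℝ :=
  ∑ i ∈ Finset.range (k - a).toNat, (-1 : ℝ) ^ i * gbinom α i * z (k - (i : ℤ))

noncomputable def risingZ (p : ℤ) (i : ℕ) : ℝ := ∏ m ∈ Finset.range i, ((p : ℝ) + (m : ℝ))

noncomputable def glLam (a : ℤ) (α lam : ℝ) (x : ℤ → ℝ) (k : ℤ) : ℝ :=
  (1 - lam) ^ (a - k) * glSum a α (fun j => (1 - lam) ^ (j - a) * x j) k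

/-!
Away from the poles of `Γ`, the kernel of the fractional sum of order `s` is
`Γ(m + s) / (m! Γ(s)) = multichoose s m`, and on functions vanishing up to `a` the kernel of
`∇ⁿ` is `(-1)ᵐ (n choose m) = multichoose (-n) m`. So every operator involved is a member of the
family `fracSum a s`, which is additive in `s` by the Chu–Vandermonde identity for
`multichoose`, and `fracSum a 0` is the identity on `(a, ∞)`: both composites collapse to
order `(n - α) + α - n = 0`. The tempered operators are conjugates by `w`, which cancels.
-/

theorem Ring.multichoose_add {R : Type*} [CommRing R] [BinomialRing R] (r s : R) (m : ℕ) :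
    Ring.multichoose (r + s) m =
      ∑ ij ∈ antidiagonal m, Ring.multichoose r ij.1 * Ring.multichoose s ij.2 := by
  have h := Ring.add_choose_eq (r := -r) (s := -s) m (Commute.all _ _)
  rw [← neg_add, Ring.choose_neg'] at h
  have hsign : ∀ ij ∈ antidiagonal m, Ring.choose (-r) ij.1 * Ring.choose (-s) ij.2 =
      Int.negOnePow m • (Ring.multichoose r ij.1 * Ring.multichoose s ij.2) := by
    rintro ⟨i, j⟩ hij
    rw [HasAntidiagonal.mem_antidiagonal] at hij
    rw [Ring.choose_neg', Ring.choose_neg', smul_mul_smul_comm, ← Int.negOnePow_add]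
    simp [← hij]
  rw [sum_congr rfl hsign, ← smul_sum] at h
  exact MulAction.injective (Int.negOnePow m) h

theorem Ring.multichoose_neg_natCast {R : Type*} [Ring R] [BinomialRing R] (n m : ℕ) :
    Ring.multichoose (-(n : R)) m = (-1) ^ m * (n.choose m : R) := by
  have h := Ring.choose_neg' (-(n : R)) m
  rw [neg_neg, Ring.choose_natCast] at h
  rw [h, Units.smul_def, ← Int.cast_smul_eq_zsmul R, smul_eq_mul, Int.cast_negOnePow_natCast,
    ← mul_assoc, ← pow_add, Even.neg_one_pow ⟨m, rfl⟩, one_mul]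

theorem Real.Gamma_add_natCast_eq_ascPochhammer {s : ℝ} (hs : ∀ m : ℕ, s ≠ -m) (m : ℕ) :
    Gamma (s + m) = (ascPochhammer ℝ m).eval s * Gamma s := by
  induction m with
  | zero => simp
  | succ m ih =>
    have hsm : s + m ≠ 0 := fun h => hs m (eq_neg_of_add_eq_zero_left h)
    rw [Nat.cast_succ, ← add_assoc, Real.Gamma_add_one hsm, ih, ascPochhammer_succ_eval]
    ring

theorem rising_natCast_div_Gamma {s : ℝ} (hs : ∀ m : ℕ, s ≠ -m) (m : ℕ) :
    rising (m + 1) (s - 1) / Gamma s = Ring.multichoose s m := by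
  have hΓ : Gamma s ≠ 0 := Real.Gamma_ne_zero hs
  have hfac : (m.factorial : ℝ) ≠ 0 := by exact_mod_cast m.factorial_ne_zero
  rw [rising, show (m : ℝ) + 1 + (s - 1) = s + m by ring, Real.Gamma_nat_eq_factorial,
    Real.Gamma_add_natCast_eq_ascPochhammer hs, ← Polynomial.ascPochhammer_smeval_eq_eval,
    ← Ring.factorial_nsmul_multichoose_eq_ascPochhammer, nsmul_eq_mul]
  field_simp

/-- The nabla fractional sum of order `s` with the Gamma-free kernel
`Ring.multichoose s m = s (s + 1) ⋯ (s + m - 1) / m!`, which makes sense for every real `s`: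
order `-n` gives `∇ⁿ` and order `0` the identity. -/
noncomputable def fracSum (a : ℤ) (s : ℝ) (z : ℤ → ℝ) (k : ℤ) : ℝ :=
  ∑ i ∈ Icc (a + 1) k, Ring.multichoose s (k - i).toNat * z i

theorem glSum_neg_eq_fracSum (a : ℤ) {s : ℝ} (hs : ∀ m : ℕ, s ≠ -m) (z : ℤ → ℝ) :
    glSum a (-s) z = fracSum a s z := by
  ext k
  refine sum_congr rfl fun i hi => ?_
  have hki : (k : ℝ) - i = ((k - i).toNat : ℕ) := by
    rw [← Int.cast_natCast, Int.toNat_of_nonneg (by grind), Int.cast_sub]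
  rw [hki, neg_neg, ← rising_natCast_div_Gamma hs]

theorem fracSum_of_le {a k : ℤ} (hk : k ≤ a) (s : ℝ) (z : ℤ → ℝ) : fracSum a s z k = 0 := by
  rw [fracSum, Icc_eq_empty (by omega), sum_empty]

theorem fracSum_zero {a k : ℤ} (hk : a + 1 ≤ k) (z : ℤ → ℝ) : fracSum a 0 z k = z k := by
  rw [fracSum, sum_eq_single_of_mem k (mem_Icc.mpr ⟨hk, le_rfl⟩)]
  · simp
  · intro i hi hik
    obtain ⟨m, hm⟩ : ∃ m, (k - i).toNat = m + 1 := ⟨(k - i).toNat - 1, by grind⟩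
    rw [hm, Ring.multichoose_zero_succ, zero_mul]

theorem sum_Icc_toNat_eq_sum_antidiagonal {i k : ℤ} (hik : i ≤ k) (f : ℕ → ℕ → ℝ) :
    ∑ j ∈ Icc i k, f (k - j).toNat (j - i).toNat =
      ∑ p ∈ antidiagonal (k - i).toNat, f p.1 p.2 := by
  refine sum_nbij' (fun j => ((k - j).toNat, (j - i).toNat)) (fun p => k - p.1) ?_ ?_ ?_ ?_
    fun _ _ => rfl
  all_goals simp only [mem_Icc, HasAntidiagonal.mem_antidiagonal, Prod.forall, Prod.mk.injEq]
  all_goals intros; omega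

theorem fracSum_fracSum (a : ℤ) (s t : ℝ) (z : ℤ → ℝ) :
    fracSum a s (fracSum a t z) = fracSum a (s + t) z := by
  ext k
  simp only [fracSum, mul_sum]
  rw [sum_comm' (t' := Icc (a + 1) k) (s' := fun i => Icc i k)
    (by intros; simp only [mem_Icc]; omega)]
  refine sum_congr rfl fun i hi => ?_
  rw [Ring.multichoose_add, ← sum_Icc_toNat_eq_sum_antidiagonal (mem_Icc.mp hi).2
    (fun p q => Ring.multichoose s p * Ring.multichoose t q), sum_mul]
  exact sum_congr rfl fun _ _ => by ring

theorem fracSum_eq_sum_range (a : ℤ) (s : ℝ) (z : ℤ → ℝ) (k : ℤ) :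
    fracSum a s z k = ∑ i ∈ range (k - a).toNat, Ring.multichoose s i * z (k - i) := by
  refine sum_nbij' (fun j => (k - j).toNat) (fun i => k - i) ?_ ?_ ?_ ?_ fun j hj => ?_
  all_goals simp only [mem_Icc, mem_range] at *
  all_goals try (intros; omega)
  rw [show k - ((k - j).toNat : ℤ) = j by omega]

theorem nabla_eq_fracSum_neg {a : ℤ} {z : ℤ → ℝ} (hz : ∀ j ≤ a, z j = 0) (n : ℕ) :
    nabla n z = fracSum a (-n) z := by
  ext k
  simp only [nabla, fracSum_eq_sum_range, Ring.multichoose_neg_natCast]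
  set N := (k - a).toNat
  calc ∑ i ∈ range (n + 1), (-1) ^ i * (n.choose i : ℝ) * z (k - i)
      = ∑ i ∈ range (max (n + 1) N), (-1) ^ i * (n.choose i : ℝ) * z (k - i) :=
        sum_subset (range_subset_range.mpr (le_max_left _ _)) fun i _ hi => by
          rw [Nat.choose_eq_zero_of_lt (by simpa using hi)]
          simp
    _ = ∑ i ∈ range N, (-1) ^ i * (n.choose i : ℝ) * z (k - i) :=
        (sum_subset (range_subset_range.mpr (le_max_right _ _)) fun i _ hi => by
          rw [hz _ (by simp at hi; omega), mul_zero]).symm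

theorem glSum_of_le {a k : ℤ} (hk : k ≤ a) (β : ℝ) (z : ℤ → ℝ) : glSum a β z k = 0 := by
  rw [glSum, Icc_eq_empty (by omega), sum_empty]

theorem mul_glSumT {w : ℤ → ℝ} {a : ℤ} (hw : ∀ k, a + 1 ≤ k → w k ≠ 0) (β : ℝ) (x : ℤ → ℝ) :
    (fun j => w j * glSumT w a β x j) = glSum a β (fun j => w j * x j) := by
  ext j
  by_cases hj : a + 1 ≤ j
  · rw [glSumT, mul_inv_cancel_left₀ (hw j hj)]
  · rw [glSumT, glSum_of_le (by omega), mul_zero, mul_zero]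

section Inversion

variable {a : ℤ} {n : ℕ} {α : ℝ}

theorem rl_glSum_neg (hα : ∀ m : ℕ, α ≠ -m) (hnα : ∀ m : ℕ, (n : ℝ) - α ≠ -m) (z : ℤ → ℝ)
    {k : ℤ} (hk : a + 1 ≤ k) : rl a α n (glSum a (-α) z) k = z k := by
  rw [rl, glSum_neg_eq_fracSum a hα, show α - n = -(n - α) by ring, glSum_neg_eq_fracSum a hnα,
    fracSum_fracSum, sub_add_cancel, nabla_eq_fracSum_neg (fun j hj => fracSum_of_le hj _ _),
    fracSum_fracSum, neg_add_cancel, fracSum_zero hk]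

theorem caputo_glSum_neg (hα : ∀ m : ℕ, α ≠ -m) (hnα : ∀ m : ℕ, (n : ℝ) - α ≠ -m)
    (z : ℤ → ℝ) {k : ℤ} (hk : a + 1 ≤ k) : caputo a α n (glSum a (-α) z) k = z k := by
  rw [caputo, glSum_neg_eq_fracSum a hα,
    nabla_eq_fracSum_neg (fun j hj => fracSum_of_le hj _ _), fracSum_fracSum,
    show α - n = -(n - α) by ring, glSum_neg_eq_fracSum a hnα, fracSum_fracSum,
    show (n : ℝ) - α + (-n + α) = 0 by ring, fracSum_zero hk]

end Inversion

theorem stmt6_general (a : ℤ) (n : ℕ) (α : ℝ) (hα1 : (n : ℝ) - 1 < α)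
    (hα2 : α < n) (w x : ℤ → ℝ) (hw : ∀ k, a + 1 ≤ k → w k ≠ 0)
    (k : ℤ) (hk : a + 1 ≤ k) :
    rlT w a α n (fun j => glSumT w a (-α) x j) k = x k
      ∧ caputoT w a α n (fun j => glSumT w a (-α) x j) k = x k := by
  have hα : ∀ m : ℕ, α ≠ -m := by
    intro m hm
    have h1 : (n + m : ℝ) < 1 := by linarith
    have h2 : (0 : ℝ) < n + m := by linarith
    norm_cast at h1 h2
    omega
  have hnα : ∀ m : ℕ, (n : ℝ) - α ≠ -m := fun m hm => by
    linarith [(m.cast_nonneg : (0 : ℝ) ≤ m)]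
  constructor
  · rw [rlT, mul_glSumT hw, rl_glSum_neg hα hnα _ hk, inv_mul_cancel_left₀ (hw k hk)]
  · rw [caputoT, mul_glSumT hw, caputo_glSum_neg hα hnα _ hk, inv_mul_cancel_left₀ (hw k hk)]

theorem stmt6 (a : ℤ) (n : ℕ) (hn : 0 < n) (α : ℝ) (hα1 : (n : ℝ) - 1 < α)
    (hα2 : α < n) (w x : ℤ → ℝ) (hw : ∀ k, a + 1 ≤ k → w k ≠ 0)
    (k : ℤ) (hk : a + 1 ≤ k) :
    rlT w a α n (fun j => glSumT w a (-α) x j) k = x k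
      ∧ caputoT w a α n (fun j => glSumT w a (-α) x j) k = x k :=
  stmt6_general a n α hα1 hα2 w x hw k hk
end

section
/- For any x : ℕ_{a+1-n} → ℝ, n ∈ ℤ₊, α ∈ (n-1,n), k ∈ ℕ_{a+1} fixed, and w : ℕ_{a+1} → ℝ∖{0}, the Caputo tempered fractional difference satisfies lim_{α→n⁻} {}_a^C∇_k^{α,w(k)} x(k) = ∇^{n,w(k)} x(k). -/
open Real Finset Filter

/-
Write `β = α - n`. After the substitution the Caputo difference is the Grünwald–Letnikov sum of
order `β` applied to `∇ⁿ z`, whose coefficient at `j` is `Γ(m - β - 1) / (Γ(m) Γ(-β))` with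
`m = k - j + 1`. Since `1/Γ` is entire and vanishes at `0`, every coefficient with `m ≥ 2` tends
to `0` as `β → 0`, while the coefficient with `m = 1` is identically `1` for `β < 0`. Only the
term `j = k` survives in the limit, leaving `∇ⁿ z(k)`.
-/

theorem Real.continuous_inv_Gamma : Continuous fun s : ℝ => (Gamma s)⁻¹ := by
  have h : (fun s : ℝ => (Gamma s)⁻¹) = fun s : ℝ => ((Complex.Gamma s)⁻¹).re := by
    funext s
    rw [Complex.Gamma_ofReal, ← Complex.ofReal_inv, Complex.ofReal_re]
  rw [h]
  exact Complex.continuous_re.comp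
    (Complex.differentiable_one_div_Gamma.continuous.comp Complex.continuous_ofReal)

theorem Real.tendsto_inv_Gamma_nhds_zero :
    Tendsto (fun s : ℝ => (Gamma s)⁻¹) (nhds 0) (nhds 0) := by
  simpa [Real.Gamma_zero] using Real.continuous_inv_Gamma.tendsto 0

theorem rising_one_neg_sub_one_div_Gamma {β : ℝ} (hβ : β < 0) :
    rising 1 (-β - 1) / Gamma (-β) = 1 := by
  have hΓ : Gamma (-β) ≠ 0 := (Real.Gamma_pos_of_pos (neg_pos.mpr hβ)).ne'
  rw [rising, show (1 : ℝ) + (-β - 1) = -β by ring, Real.Gamma_one, div_one, div_self hΓ]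

theorem tendsto_rising_neg_sub_one_div_Gamma {m : ℝ} (hm : 1 < m) :
    Tendsto (fun β : ℝ => rising m (-β - 1) / Gamma (-β)) (nhds 0) (nhds 0) := by
  have hΓ : ContinuousAt Gamma (m + (-0 - 1)) :=
    Real.differentiableOn_Gamma_Ioi.continuousOn.continuousAt
      (Ioi_mem_nhds (by linarith))
  have hnum : Tendsto (fun β : ℝ => Gamma (m + (-β - 1))) (nhds 0)
      (nhds (Gamma (m + (-0 - 1)))) :=
    hΓ.tendsto.comp (by fun_prop : Continuous fun β : ℝ => m + (-β - 1)).continuousAt.tendsto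
  have hinv : Tendsto (fun β : ℝ => (Gamma (-β))⁻¹) (nhds 0) (nhds 0) :=
    Real.tendsto_inv_Gamma_nhds_zero.comp (continuous_neg.tendsto' (0 : ℝ) 0 neg_zero)
  simpa [rising, div_eq_mul_inv, mul_assoc] using (hnum.div_const (Gamma m)).mul hinv

theorem tendsto_glSum_nhdsLT_zero (a : ℤ) (z : ℤ → ℝ) {k : ℤ} (hk : a + 1 ≤ k) :
    Tendsto (fun β : ℝ => glSum a β z k) (nhdsWithin 0 (Set.Iio 0)) (nhds (z k)) := by
  have hterm : ∀ j ∈ Icc (a + 1) k,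
      Tendsto (fun β : ℝ => rising ((k : ℝ) - j + 1) (-β - 1) / Gamma (-β) * z j)
        (nhdsWithin 0 (Set.Iio 0)) (nhds (if j = k then z k else 0)) := by
    intro j hj
    rcases eq_or_ne j k with rfl | hjk
    · refine tendsto_const_nhds.congr' ?_
      filter_upwards [self_mem_nhdsWithin] with β hβ
      rw [if_pos rfl, sub_self, zero_add, rising_one_neg_sub_one_div_Gamma hβ, one_mul]
    · have hjk' : (j : ℝ) < k := by exact_mod_cast (mem_Icc.mp hj).2.lt_of_ne hjk
      simpa only [if_neg hjk, zero_mul] using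
        ((tendsto_rising_neg_sub_one_div_Gamma (m := (k : ℝ) - j + 1) (by linarith)).mono_left
          nhdsWithin_le_nhds).mul_const (z j)
  simpa [glSum, sum_ite_eq', hk] using tendsto_finsetSum _ hterm

theorem tendsto_caputo_nhdsLT (a : ℤ) (n : ℕ) (z : ℤ → ℝ) {k : ℤ} (hk : a + 1 ≤ k) :
    Tendsto (fun α : ℝ => caputo a α n z k) (nhdsWithin (n : ℝ) (Set.Iio n))
      (nhds (nabla n z k)) := by
  have hshift : Tendsto (fun α : ℝ => α - n) (nhdsWithin (n : ℝ) (Set.Iio n))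
      (nhdsWithin 0 (Set.Iio 0)) := by
    refine tendsto_nhdsWithin_of_tendsto_nhds_of_eventually_within _ ?_ ?_
    · simpa using ((continuous_sub_right (n : ℝ)).tendsto n).mono_left nhdsWithin_le_nhds
    · filter_upwards [self_mem_nhdsWithin] with α hα
      exact sub_neg.mpr (Set.mem_Iio.mp hα)
  exact (tendsto_glSum_nhdsLT_zero a (fun j => nabla n z j) hk).comp hshift

theorem stmt9_general (a : ℤ) (n : ℕ) (w x : ℤ → ℝ)
    (k : ℤ) (hk : a + 1 ≤ k) :
    Filter.Tendsto (fun α : ℝ => caputoT w a α n x k)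
      (nhdsWithin (n : ℝ) (Set.Ioo ((n : ℝ) - 1) (n : ℝ)))
      (nhds (nablaT w n x k)) :=
  ((tendsto_caputo_nhdsLT a n (fun j => w j * x j) hk).const_mul (w k)⁻¹).mono_left
    (nhdsWithin_mono _ Set.Ioo_subset_Iio_self)

theorem stmt9 (a : ℤ) (n : ℕ) (hn : 0 < n) (w x : ℤ → ℝ)
    (hw : ∀ k, a + 1 ≤ k → w k ≠ 0) (k : ℤ) (hk : a + 1 ≤ k) :
    Filter.Tendsto (fun α : ℝ => caputoT w a α n x k)
      (nhdsWithin (n : ℝ) (Set.Ioo ((n : ℝ) - 1) (n : ℝ)))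
      (nhds (nablaT w n x k)) :=
  stmt9_general a n w x k hk
end

section
/- Convolution commutes with the Grünwald–Letnikov tempered operator with exponential tempering: for α ∈ ℝ∖ℤ₊, λ ≠ 1, x, y : ℕ_{a+1} → ℝ, a ∈ ℤ, and k ∈ ℕ_{a+1}, ∑_{j=a+1}^k x(k+a+1-j) · {}_a^G∇_j^{α,λ} y(j) = ∑_{j=a+1}^k {}_a^G∇_j^{α,λ} x(j) · y(k+a+1-j), where {}_a^G∇_k^{α,λ} x(k) := (1-λ)^{a-k} · {}_a^G∇_k^α[(1-λ)^{k-a} x(k)]. -/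
open Real Finset Filter

/-- Both sides run over `a + 1 ≤ i ≤ j ≤ k`; the reflection
`(j, i) ↦ (k + a + 1 - i, k + a + 1 - j)` exchanges them and preserves `j - i`. -/
theorem sum_Icc_reflect_mul_toeplitz_comm {R : Type*} [CommSemiring R] (a k : ℤ)
    (K x y : ℤ → R) :
    ∑ j ∈ Icc (a + 1) k, x (k + a + 1 - j) * ∑ i ∈ Icc (a + 1) j, K (j - i) * y i
      = ∑ j ∈ Icc (a + 1) k, (∑ i ∈ Icc (a + 1) j, K (j - i) * x i) * y (k + a + 1 - j) := by
  simp only [mul_sum, sum_mul]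
  rw [sum_sigma', sum_sigma']
  refine sum_nbij' (fun p => ⟨k + a + 1 - p.2, k + a + 1 - p.1⟩)
    (fun p => ⟨k + a + 1 - p.2, k + a + 1 - p.1⟩) ?_ ?_ ?_ ?_ ?_
  · rintro ⟨j, i⟩ h
    simp only [mem_sigma, mem_Icc] at h ⊢
    omega
  · rintro ⟨j, i⟩ h
    simp only [mem_sigma, mem_Icc] at h ⊢
    omega
  · rintro ⟨j, i⟩ -
    simp only [Sigma.mk.injEq, heq_eq_eq]
    omega
  · rintro ⟨j, i⟩ -
    simp only [Sigma.mk.injEq, heq_eq_eq]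
    omega
  · rintro ⟨j, i⟩ -
    rw [show k + a + 1 - (k + a + 1 - i) = i by ring,
      show k + a + 1 - i - (k + a + 1 - j) = j - i by ring]
    ring

-- The paper's tempered kernel `h_λ`, shifted so that it is indexed by `j - i`.
noncomputable def glLamKernel (α lam : ℝ) (n : ℤ) : ℝ :=
  (1 - lam) ^ (-n) * (rising ((n : ℝ) + 1) (-α - 1) / Real.Gamma (-α))

theorem glLam_eq_sum_kernel (a : ℤ) (α : ℝ) {lam : ℝ} (hlam : lam ≠ 1) (z : ℤ → ℝ) (j : ℤ) :
    glLam a α lam z j = ∑ i ∈ Icc (a + 1) j, glLamKernel α lam (j - i) * z i := by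
  have h1 : 1 - lam ≠ 0 := sub_ne_zero.mpr hlam.symm
  rw [glLam, glSum, mul_sum]
  refine sum_congr rfl fun i _ => ?_
  have hpow : (1 - lam) ^ (a - j) * (1 - lam) ^ (i - a) = (1 - lam) ^ (-(j - i)) := by
    rw [← zpow_add₀ h1]
    ring_nf
  rw [glLamKernel, ← hpow]
  push_cast
  ring

theorem stmt18_general (a : ℤ) (α : ℝ)
    (lam : ℝ) (hlam : lam ≠ 1) (x y : ℤ → ℝ) (k : ℤ) :
    ∑ j ∈ Finset.Icc (a + 1) k, x (k + a + 1 - j) * glLam a α lam y j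
      = ∑ j ∈ Finset.Icc (a + 1) k, glLam a α lam x j * y (k + a + 1 - j) := by
  simp only [glLam_eq_sum_kernel a α hlam]
  exact sum_Icc_reflect_mul_toeplitz_comm a k (glLamKernel α lam) x y

theorem stmt18 (a : ℤ) (α : ℝ) (hα : ¬ ∃ m : ℕ, 0 < m ∧ α = m)
    (lam : ℝ) (hlam : lam ≠ 1) (x y : ℤ → ℝ) (k : ℤ) (hk : a + 1 ≤ k) :
    ∑ j ∈ Finset.Icc (a + 1) k, x (k + a + 1 - j) * glLam a α lam y j
      = ∑ j ∈ Finset.Icc (a + 1) k, glLam a α lam x j * y (k + a + 1 - j) :=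
  stmt18_general a α lam hlam x y k
end
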